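/- arXiv:1710.03407 — 3 statements merged into one kernel-verified Lean document; each statement's English description precedes it below -/
import Mathlib

section
/- If a function f in H^1(a,b) attains its minimum over [a,b] at a point t0 in [a,b] and 0 < α < 1, then (ABC_a D^α f)(t0) ≤ (B(α)/(1-α)) · E_α[-(α/(1-α))(t0-a)^α] · (f(t0) - f(a)) ≤ 0. -/
open MeasureTheory Real Set

/-- One-parameter Mittag-Leffler function `E_α(z) = Σ z^k / Γ(αk+1)`. -/
noncomputable def mlE (α z : ℝ) : ℝ := ∑' k : ℕ, z ^ k / Real.Gamma (α * k + 1)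

/-- Left ABC (Caputo with Mittag-Leffler kernel) fractional derivative of order `α`
with base point `a` and normalization constant `Bα`. -/
noncomputable def abc (Bα α a : ℝ) (f : ℝ → ℝ) (t : ℝ) : ℝ :=
  (Bα / (1 - α)) * ∫ s in a..t, mlE α (-(α / (1 - α)) * (t - s) ^ α) * deriv f s

/-- Left ABR (Riemann–Liouville with Mittag-Leffler kernel) fractional derivative,
base point `0`. -/
noncomputable def abr (Bα α : ℝ) (f : ℝ → ℝ) (t : ℝ) : ℝ :=
  (Bα / (1 - α)) *
    deriv (fun τ => ∫ s in (0:ℝ)..τ, mlE α (-(α / (1 - α)) * (τ - s) ^ α) * f s) t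

/-- The spectral kernel `K_α` in the complete-monotonicity representation of `E_α`. -/
noncomputable def Kker (α r : ℝ) : ℝ :=
  (1 / Real.pi) * (r ^ (α - 1) * Real.sin (α * Real.pi)) /
    (r ^ (2 * α) + 2 * r ^ α * Real.cos (α * Real.pi) + 1)

/-- Laplace convolution on `[0, t]`. -/
noncomputable def lconv (f g : ℝ → ℝ) (t : ℝ) : ℝ := ∫ s in (0:ℝ)..t, f (t - s) * g s

/-- Membership in `H^1(a,b)` (together with the continuity used in the paper):
differentiable on `(a,b)` with square-integrable derivative, continuous on `[a,b]`. -/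
def MemH1 (a b : ℝ) (f : ℝ → ℝ) : Prop :=
  ContinuousOn f (Set.Icc a b) ∧ DifferentiableOn ℝ f (Set.Ioo a b) ∧
    MeasureTheory.IntegrableOn (fun s => (deriv f s) ^ 2) (Set.Ioo a b)

/-!
Integrating by parts against `f - f t₀`, which vanishes at `t₀` and is nonnegative on `[a, t₀]`,
reduces both inequalities to the kernel `u ↦ E_α(-λ u^α)`, `λ = α / (1 - α)`, being nonnegative and
nonincreasing; its derivative is `-λ u^(α-1) E_{α,α}(-λ u^α)`, so it suffices that `E_{α,β} ≥ 0` on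
`(-∞, 0]` for `β ∈ {α, 1}`.

For `0 < α ≤ β ≤ 1` the Laplace transform of `t^(β-1) E_{α,β}(-λ t^α)` is
`F(s) = s^(α-β) / (s^α + λ)`. Each `(-1)ⁿ F⁽ⁿ⁾` is a finite sum of terms `c s^e (s^α + λ)^(-m)` with
`c ≥ 0` and `e ≤ 0`, hence nonnegative, and the Post–Widder inversion formula
`E_{α,β}(-λ) = lim n^(n+1) / n! · (-1)ⁿ F⁽ⁿ⁾(n)`, proved termwise on the series by dominated
convergence, gives `E_{α,β}(-λ) ≥ 0`.
-/

open Filter Topology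

namespace MittagLeffler

/-- `E_{α,β}`; `mlE α` is definitionally `mlE₂ α 1`. -/
noncomputable def mlE₂ (α β z : ℝ) : ℝ := ∑' k : ℕ, z ^ k / Gamma (α * k + β)

variable {α β l : ℝ}

theorem Gamma_add_one_le_Gamma_add_mul_rpow (hα0 : 0 < α) (hα1 : α < 1) {x : ℝ}
    (hx : 0 < x + α) : Gamma (x + 1) ≤ Gamma (x + α) * (x + α) ^ (1 - α) := by
  have hΓ : 0 < Gamma (x + α) := Gamma_pos_of_pos hx
  have h := Gamma_mul_add_mul_le_rpow_Gamma_mul_rpow_Gamma hx (by linarith : 0 < x + α + 1)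
    hα0 (sub_pos.2 hα1) (add_sub_cancel α 1)
  rw [show α * (x + α) + (1 - α) * (x + α + 1) = x + 1 by ring, Gamma_add_one hx.ne',
    mul_rpow hx.le hΓ.le, ← mul_assoc, mul_right_comm, ← rpow_add hΓ, add_sub_cancel, rpow_one]
    at h
  exact h

theorem rpow_mul_Gamma_le (hα0 : 0 < α) (hα1 : α < 1) {y : ℝ} (hy : α ≤ y) :
    y ^ α * Gamma y ≤ 2 ^ (1 - α) * Gamma (y + α) := by
  have hy0 : 0 < y := hα0.trans_le hy
  have hpow : 0 < y ^ (1 - α) := rpow_pos_of_pos hy0 _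
  have h2y : (y + α) ^ (1 - α) ≤ 2 ^ (1 - α) * y ^ (1 - α) := by
    rw [← mul_rpow zero_le_two hy0.le]
    exact rpow_le_rpow (by linarith) (by linarith) (by linarith)
  have hsplit : y ^ α * y ^ (1 - α) = y := by rw [← rpow_add hy0]; norm_num
  refine le_of_mul_le_mul_right ?_ hpow
  calc y ^ α * Gamma y * y ^ (1 - α) = (y ^ α * y ^ (1 - α)) * Gamma y := by ring
    _ = Gamma (y + 1) := by rw [hsplit, Gamma_add_one hy0.ne']
    _ ≤ Gamma (y + α) * (y + α) ^ (1 - α) :=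
        Gamma_add_one_le_Gamma_add_mul_rpow hα0 hα1 (by linarith)
    _ ≤ Gamma (y + α) * (2 ^ (1 - α) * y ^ (1 - α)) :=
        mul_le_mul_of_nonneg_left h2y (Gamma_pos_of_pos (by linarith)).le
    _ = 2 ^ (1 - α) * Gamma (y + α) * y ^ (1 - α) := by ring

theorem summable_add_one_pow_mul_pow_div_Gamma (hα0 : 0 < α) (hα1 : α < 1) {γ x : ℝ}
    (hγ : 0 < γ) (hx : 0 < x) (m : ℕ) :
    Summable (fun k : ℕ => ((k : ℝ) + 1) ^ m * x ^ k / Gamma (α * k + γ)) := by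
  have hlin : Tendsto (fun k : ℕ => α * k + γ) atTop atTop :=
    tendsto_atTop_add_const_right _ _ (tendsto_natCast_atTop_atTop.const_mul_atTop hα0)
  have hlarge : ∀ᶠ k : ℕ in atTop,
      2 ^ (m + 1) * x * 2 ^ (1 - α) ≤ (α * k + γ) ^ α ∧ α ≤ α * k + γ :=
    ((tendsto_rpow_atTop hα0).comp hlin).eventually_ge_atTop _ |>.and
      (hlin.eventually_ge_atTop α)
  refine summable_of_ratio_norm_eventually_le (r := 1 / 2) (by norm_num) ?_
  filter_upwards [hlarge] with k ⟨hk, hαk⟩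
  set y := α * k + γ
  have hy0 : 0 < y := hα0.trans_le hαk
  have hΓ : 0 < Gamma y := Gamma_pos_of_pos hy0
  have hΓα : 0 < Gamma (y + α) := Gamma_pos_of_pos (by linarith)
  have hnext : α * ((k + 1 : ℕ) : ℝ) + γ = y + α := by push_cast; ring
  have hpoly : (((k + 1 : ℕ) : ℝ) + 1) ^ m ≤ 2 ^ m * ((k : ℝ) + 1) ^ m := by
    rw [← mul_pow]; gcongr; push_cast; linarith [(k.cast_nonneg : (0 : ℝ) ≤ k)]
  have hgrowth : 2 ^ (m + 1) * x * Gamma y ≤ Gamma (y + α) := by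
    have h2 : (0 : ℝ) < 2 ^ (1 - α) := by positivity
    refine le_of_mul_le_mul_right ?_ h2
    calc 2 ^ (m + 1) * x * Gamma y * 2 ^ (1 - α) ≤ y ^ α * Gamma y := by
          rw [mul_right_comm]; exact mul_le_mul_of_nonneg_right hk hΓ.le
      _ ≤ 2 ^ (1 - α) * Gamma (y + α) := rpow_mul_Gamma_le hα0 hα1 hαk
      _ = Gamma (y + α) * 2 ^ (1 - α) := mul_comm _ _
  rw [norm_of_nonneg (by positivity), norm_of_nonneg (by positivity), hnext,
    div_le_iff₀ hΓα, pow_succ]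
  calc (((k + 1 : ℕ) : ℝ) + 1) ^ m * (x ^ k * x)
      ≤ 2 ^ m * ((k : ℝ) + 1) ^ m * (x ^ k * x) := by gcongr
    _ = 1 / 2 * (((k : ℝ) + 1) ^ m * x ^ k / Gamma y) * (2 ^ (m + 1) * x * Gamma y) := by
        field_simp; ring
    _ ≤ 1 / 2 * (((k : ℝ) + 1) ^ m * x ^ k / Gamma y) * Gamma (y + α) := by gcongr

theorem summable_mlE₂ (hα0 : 0 < α) (hα1 : α < 1) (hβ : 0 < β) (z : ℝ) :
    Summable (fun k : ℕ => z ^ k / Gamma (α * k + β)) := by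
  have h := summable_add_one_pow_mul_pow_div_Gamma hα0 hα1 hβ (by positivity : 0 < |z| + 1) 0
  simp only [pow_zero, one_mul] at h
  refine .of_norm_bounded h fun k => ?_
  have hΓ : 0 < Gamma (α * k + β) := Gamma_pos_of_pos (by positivity)
  rw [norm_div, norm_pow, norm_of_nonneg hΓ.le, norm_eq_abs]
  gcongr
  linarith

theorem hasDerivAt_mlE₂ (hα0 : 0 < α) (hα1 : α < 1) (hβ : 0 < β) (z : ℝ) :
    HasDerivAt (mlE₂ α β) (∑' k : ℕ, (k + 1) * z ^ k / Gamma (α * (k + 1) + β)) z := by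
  set R := |z| + 1
  have hR : 0 < R := by positivity
  have hΓ : ∀ k : ℕ, 0 < Gamma (α * k + β) := fun k => Gamma_pos_of_pos (by positivity)
  have hbound : Summable (fun k : ℕ => k * R ^ (k - 1) / Gamma (α * k + β)) := by
    have h := summable_add_one_pow_mul_pow_div_Gamma hα0 hα1 (by positivity : 0 < α + β) hR 1
    refine (summable_nat_add_iff 1).1 (h.congr fun k => ?_)
    push_cast
    rw [pow_one, show α * ((k : ℝ) + 1) + β = α * k + (α + β) by ring]
  have hderiv : Summable (fun k : ℕ => k * z ^ (k - 1) / Gamma (α * k + β)) :=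
    .of_norm_bounded hbound fun k => by
      rw [norm_div, norm_mul, norm_pow, norm_of_nonneg (hΓ k).le, Real.norm_natCast,
        norm_eq_abs]
      gcongr
      linarith
  have hz : z ∈ Ioo (-R) R := abs_lt.1 (by linarith)
  have h := hasDerivAt_tsum_of_isPreconnected hbound isOpen_Ioo isPreconnected_Ioo
    (g := fun (k : ℕ) (y : ℝ) => y ^ k / Gamma (α * k + β))
    (g' := fun (k : ℕ) (y : ℝ) => k * y ^ (k - 1) / Gamma (α * k + β))
    (fun k y _ => (hasDerivAt_pow k y).div_const _)
    (fun k y hy => by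
      rw [norm_div, norm_mul, norm_pow, norm_of_nonneg (hΓ k).le, Real.norm_natCast,
        norm_eq_abs]
      gcongr
      exact (abs_lt.2 hy).le)
    hz (summable_mlE₂ hα0 hα1 hβ z) hz
  have hval : ∑' k : ℕ, k * z ^ (k - 1) / Gamma (α * k + β)
      = ∑' k : ℕ, (k + 1) * z ^ k / Gamma (α * (k + 1) + β) := by
    rw [hderiv.tsum_eq_zero_add]
    simp
  rw [← hval]
  exact h

theorem continuous_mlE₂ (hα0 : 0 < α) (hα1 : α < 1) (hβ : 0 < β) : Continuous (mlE₂ α β) :=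
  continuous_iff_continuousAt.2 fun z => (hasDerivAt_mlE₂ hα0 hα1 hβ z).continuousAt

theorem hasDerivAt_mlE (hα0 : 0 < α) (hα1 : α < 1) (z : ℝ) :
    HasDerivAt (mlE α) (mlE₂ α α z / α) z := by
  refine (hasDerivAt_mlE₂ hα0 hα1 one_pos z).congr_deriv ?_
  rw [mlE₂, ← tsum_div_const]
  refine tsum_congr fun k => ?_
  have hk : 0 < α * ((k : ℝ) + 1) := by positivity
  rw [Gamma_add_one hk.ne', show α * (k : ℝ) + α = α * (k + 1) by ring]
  field_simp

theorem hasDerivAt_mlE_neg_mul_rpow (hα0 : 0 < α) (hα1 : α < 1) (l : ℝ) {t : ℝ} (ht : 0 < t) :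
    HasDerivAt (fun u => mlE α (-l * u ^ α)) (-(l * t ^ (α - 1) * mlE₂ α α (-l * t ^ α))) t := by
  refine ((hasDerivAt_mlE hα0 hα1 _).comp t
    ((hasDerivAt_rpow_const (p := α) (Or.inl ht.ne')).const_mul (-l))).congr_deriv ?_
  field_simp

theorem summable_add_one_pow_mul_geometric {r : ℝ} (hr0 : 0 < r) (hr1 : r < 1) (n : ℕ) :
    Summable (fun k : ℕ => ((k : ℝ) + 1) ^ n * r ^ k) := by
  have h := ((summable_nat_add_iff 1).2
    (summable_pow_mul_geometric_of_norm_lt_one (R := ℝ) n (r := r)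
      (by rwa [norm_of_nonneg hr0.le]))).mul_left r⁻¹
  refine h.congr fun k => ?_
  push_cast
  rw [pow_succ, mul_comm r⁻¹, ← mul_assoc, mul_inv_cancel_right₀ hr0.ne']

noncomputable def laplaceTerm (α β l : ℝ) (n : ℕ) (s : ℝ) (k : ℕ) : ℝ :=
  (-l) ^ k * (∏ j ∈ Finset.range n, (α * k + β + j)) * s ^ (-(α * k + β + n))

/-- `(-1)ⁿ` times the `n`-th derivative of `s ↦ Σ (-l)^k s^(-(αk + β))`, the Laplace transform of
`t ↦ t^(β-1) E_{α,β}(-l t^α)`. -/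
noncomputable def laplaceDeriv (α β l : ℝ) (n : ℕ) (s : ℝ) : ℝ :=
  ∑' k, laplaceTerm α β l n s k

theorem mul_rpow_neg_lt_one (hα : 0 < α) (hl : 0 < l) {s : ℝ} (hs : l ^ α⁻¹ < s) :
    l * s ^ (-α) < 1 := by
  have hs0 : 0 < s := (rpow_nonneg hl.le _).trans_lt hs
  have hlt : l < s ^ α := by
    simpa [← rpow_mul hl.le, inv_mul_cancel₀ hα.ne'] using
      rpow_lt_rpow (rpow_nonneg hl.le _) hs hα
  rwa [rpow_neg hs0.le, mul_inv_lt_iff₀ (rpow_pos_of_pos hs0 _), one_mul]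

theorem abs_laplaceTerm_le (hα0 : 0 ≤ α) (hα1 : α ≤ 1) (hβ0 : 0 < β) (hβ1 : β ≤ 1)
    (hl : 0 ≤ l) {p s : ℝ} (hp : 0 < p) (hps : p ≤ s) (n k : ℕ) :
    |laplaceTerm α β l n s k|
      ≤ n ^ n * p ^ (-(β + n)) * (((k : ℝ) + 1) ^ n * (l * p ^ (-α)) ^ k) := by
  have hprod_nonneg : 0 ≤ ∏ j ∈ Finset.range n, (α * k + β + j) :=
    Finset.prod_nonneg fun j _ => by positivity
  have hprod : ∏ j ∈ Finset.range n, (α * k + β + j) ≤ ((n : ℝ) * (k + 1)) ^ n := by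
    refine (Finset.prod_le_prod (fun j _ => by positivity) fun j hj => ?_).trans_eq
      (by rw [Finset.prod_const, Finset.card_range])
    have hj : (j : ℝ) + 1 ≤ n := by exact_mod_cast Finset.mem_range.1 hj
    nlinarith [(k.cast_nonneg : (0 : ℝ) ≤ k), (j.cast_nonneg : (0 : ℝ) ≤ j)]
  have hrpow : s ^ (-(α * k + β + n)) ≤ (p ^ (-α)) ^ k * p ^ (-(β + n)) := by
    rw [← rpow_natCast, ← rpow_mul hp.le, ← rpow_add hp]
    have hexp : 0 ≤ α * k + β + n := by positivity
    exact (rpow_le_rpow_of_nonpos hp hps (by linarith)).trans_eq (by ring_nf)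
  rw [laplaceTerm, abs_mul, abs_mul, abs_of_nonneg hprod_nonneg,
    abs_of_pos (rpow_pos_of_pos (hp.trans_le hps) _), abs_pow, abs_neg, abs_of_nonneg hl]
  calc l ^ k * (∏ j ∈ Finset.range n, (α * k + β + j)) * s ^ (-(α * k + β + n))
      ≤ l ^ k * ((n : ℝ) * (k + 1)) ^ n * ((p ^ (-α)) ^ k * p ^ (-(β + n))) := by
        have := rpow_pos_of_pos (hp.trans_le hps) (-(α * k + β + n))
        gcongr
    _ = _ := by rw [mul_pow, mul_pow]; ring

theorem summable_laplaceTerm (hα0 : 0 < α) (hα1 : α ≤ 1) (hβ0 : 0 < β) (hβ1 : β ≤ 1)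
    (hl : 0 < l) {s : ℝ} (hs : l ^ α⁻¹ < s) (n : ℕ) :
    Summable (laplaceTerm α β l n s) := by
  have hs0 : 0 < s := (rpow_nonneg hl.le _).trans_lt hs
  exact .of_norm_bounded (((summable_add_one_pow_mul_geometric (by positivity)
    (mul_rpow_neg_lt_one hα0 hl hs) n).mul_left _))
    fun k => abs_laplaceTerm_le hα0.le hα1 hβ0 hβ1 hl.le hs0 le_rfl n k

theorem hasDerivAt_laplaceDeriv (hα0 : 0 < α) (hα1 : α ≤ 1) (hβ0 : 0 < β) (hβ1 : β ≤ 1)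
    (hl : 0 < l) {s : ℝ} (hs : l ^ α⁻¹ < s) (n : ℕ) :
    HasDerivAt (laplaceDeriv α β l n) (-laplaceDeriv α β l (n + 1) s) s := by
  obtain ⟨p, hlp, hps⟩ := exists_between hs
  have hp0 : 0 < p := (rpow_nonneg hl.le _).trans_lt hlp
  have h := hasDerivAt_tsum_of_isPreconnected
    (((summable_add_one_pow_mul_geometric (by positivity)
      (mul_rpow_neg_lt_one hα0 hl hlp) (n + 1)).mul_left _))
    isOpen_Ioi isPreconnected_Ioi
    (g := fun (k : ℕ) (y : ℝ) => laplaceTerm α β l n y k)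
    (g' := fun (k : ℕ) (y : ℝ) => -laplaceTerm α β l (n + 1) y k)
    (fun k y (hy : p < y) => by
      refine ((hasDerivAt_rpow_const (Or.inl (hp0.trans hy).ne')).const_mul _).congr_deriv ?_
      rw [laplaceTerm, Finset.prod_range_succ, show -(α * k + β + ((n + 1 : ℕ) : ℝ))
        = -(α * k + β + n) - 1 by push_cast; ring]
      ring)
    (fun k y (hy : p < y) => by
      rw [norm_neg, norm_eq_abs]
      exact abs_laplaceTerm_le hα0.le hα1 hβ0 hβ1 hl.le hp0 hy.le _ k)
    hps (summable_laplaceTerm hα0 hα1 hβ0 hβ1 hl hs n) hps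
  rwa [tsum_neg] at h

theorem laplaceDeriv_zero (hα0 : 0 < α) (hl : 0 < l) {s : ℝ} (hs : l ^ α⁻¹ < s) :
    laplaceDeriv α β l 0 s = s ^ (α - β) / (s ^ α + l) := by
  have hs0 : 0 < s := (rpow_nonneg hl.le _).trans_lt hs
  have hr : ‖-l * s ^ (-α)‖ < 1 := by
    rw [norm_mul, norm_neg, norm_of_nonneg hl.le, norm_of_nonneg (rpow_nonneg hs0.le _)]
    exact mul_rpow_neg_lt_one hα0 hl hs
  have hterm : ∀ k : ℕ, laplaceTerm α β l 0 s k = (-l * s ^ (-α)) ^ k * s ^ (-β) := by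
    intro k
    rw [laplaceTerm, mul_pow, ← rpow_natCast (s ^ (-α)), ← rpow_mul hs0.le,
      show -(α * k + β + ((0 : ℕ) : ℝ)) = -α * k + -β by push_cast; ring, rpow_add hs0]
    simp only [Finset.range_zero, Finset.prod_empty]
    ring
  have hsα : s ^ (-α) * s ^ α = 1 := by rw [← rpow_add hs0]; simp
  have hden : (1 - -l * s ^ (-α)) * s ^ α = s ^ α + l := by linear_combination l * hsα
  rw [laplaceDeriv, tsum_congr hterm, tsum_mul_right, tsum_geometric_of_norm_lt_one hr,
    sub_eq_add_neg α, rpow_add hs0, ← hden]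
  field_simp

structure PowTerm where
  coeff : ℝ
  expo : ℝ
  pow : ℕ

namespace PowTerm

variable {s : ℝ}

noncomputable def eval (α l : ℝ) (P : PowTerm) (s : ℝ) : ℝ :=
  P.coeff * s ^ P.expo * (s ^ α + l) ^ (-(P.pow : ℝ))

def negDeriv (α : ℝ) (P : PowTerm) : List PowTerm :=
  [⟨-(P.coeff * P.expo), P.expo - 1, P.pow⟩, ⟨P.coeff * α * P.pow, P.expo + α - 1, P.pow + 1⟩]

noncomputable def evalSum (α l : ℝ) (L : List PowTerm) (s : ℝ) : ℝ :=
  (L.map fun P => P.eval α l s).sum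

def negDerivList (α : ℝ) (L : List PowTerm) : List PowTerm := L.flatMap (negDeriv α)

def Nonneg (P : PowTerm) : Prop := 0 ≤ P.coeff ∧ P.expo ≤ 0

theorem hasDerivAt_eval (hl : 0 ≤ l) (hs : 0 < s) (P : PowTerm) :
    HasDerivAt (P.eval α l) (-evalSum α l (P.negDeriv α) s) s := by
  have hbase : 0 < s ^ α + l := by positivity
  have h := ((hasDerivAt_rpow_const (p := P.expo) (Or.inl hs.ne')).const_mul P.coeff).mul
    (((hasDerivAt_rpow_const (p := α) (Or.inl hs.ne')).add_const l).rpow_const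
      (p := -(P.pow : ℝ)) (Or.inl hbase.ne'))
  refine h.congr_deriv ?_
  have hsplit : s ^ (P.expo + α - 1) = s ^ P.expo * s ^ (α - 1) := by
    rw [add_sub_assoc, rpow_add hs]
  simp only [evalSum, negDeriv, eval, List.map_cons, List.map_nil, List.sum_cons, List.sum_nil,
    hsplit]
  push_cast
  rw [show -((P.pow : ℝ) + 1) = -(P.pow : ℝ) - 1 by ring]
  ring

theorem evalSum_append (L₁ L₂ : List PowTerm) :
    evalSum α l (L₁ ++ L₂) s = evalSum α l L₁ s + evalSum α l L₂ s := by
  simp [evalSum]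

theorem hasDerivAt_evalSum (hl : 0 ≤ l) (hs : 0 < s) (L : List PowTerm) :
    HasDerivAt (evalSum α l L) (-evalSum α l (negDerivList α L) s) s := by
  induction L with
  | nil => exact (hasDerivAt_const s 0).congr_deriv (by simp [evalSum, negDerivList])
  | cons P L ih =>
    have h := (hasDerivAt_eval (α := α) hl hs P).add ih
    simp only [negDerivList, List.flatMap_cons, evalSum_append, neg_add] at h ⊢
    exact h

theorem Nonneg.eval_nonneg {P : PowTerm} (hP : P.Nonneg) (hl : 0 ≤ l) (hs : 0 < s) :
    0 ≤ P.eval α l s :=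
  mul_nonneg (mul_nonneg hP.1 (rpow_nonneg hs.le _)) (rpow_nonneg (by positivity) _)

theorem evalSum_nonneg {L : List PowTerm} (hL : ∀ P ∈ L, P.Nonneg) (hl : 0 ≤ l) (hs : 0 < s) :
    0 ≤ evalSum α l L s :=
  List.sum_nonneg fun _ hx => by
    obtain ⟨P, hP, rfl⟩ := List.mem_map.1 hx
    exact (hL P hP).eval_nonneg hl hs

theorem Nonneg.negDerivList (hα0 : 0 ≤ α) (hα1 : α ≤ 1) {L : List PowTerm}
    (hL : ∀ P ∈ L, P.Nonneg) : ∀ Q ∈ negDerivList α L, Q.Nonneg := by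
  intro Q hQ
  obtain ⟨P, hP, hQ⟩ := List.mem_flatMap.1 hQ
  obtain ⟨hc, he⟩ := hL P hP
  simp only [negDeriv, List.mem_cons, List.not_mem_nil, or_false] at hQ
  rcases hQ with rfl | rfl
  · exact ⟨by nlinarith, by linarith⟩
  · exact ⟨by positivity, by linarith⟩

end PowTerm

theorem laplaceDeriv_eq_evalSum (hα0 : 0 < α) (hα1 : α ≤ 1) (hβ0 : 0 < β) (hβ1 : β ≤ 1)
    (hl : 0 < l) (n : ℕ) {s : ℝ} (hs : l ^ α⁻¹ < s) :
    laplaceDeriv α β l n s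
      = PowTerm.evalSum α l ((PowTerm.negDerivList α)^[n] [⟨1, α - β, 1⟩]) s := by
  induction n generalizing s with
  | zero => simp [laplaceDeriv_zero hα0 hl hs, PowTerm.evalSum, PowTerm.eval, div_eq_mul_inv]
  | succ n ih =>
    have hs0 : 0 < s := (rpow_nonneg hl.le _).trans_lt hs
    have heq : laplaceDeriv α β l n =ᶠ[𝓝 s]
        PowTerm.evalSum α l ((PowTerm.negDerivList α)^[n] [⟨1, α - β, 1⟩]) :=
      eventually_of_mem (Ioi_mem_nhds hs) fun y hy => ih hy
    have h := (hasDerivAt_laplaceDeriv hα0 hα1 hβ0 hβ1 hl hs n).unique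
      ((PowTerm.hasDerivAt_evalSum hl.le hs0 _).congr_of_eventuallyEq heq)
    rw [Function.iterate_succ_apply']
    exact neg_inj.1 h

theorem laplaceDeriv_nonneg (hα0 : 0 < α) (hα1 : α ≤ 1) (hαβ : α ≤ β) (hβ1 : β ≤ 1)
    (hl : 0 < l) (n : ℕ) {s : ℝ} (hs : l ^ α⁻¹ < s) : 0 ≤ laplaceDeriv α β l n s := by
  have hs0 : 0 < s := (rpow_nonneg hl.le _).trans_lt hs
  have hbase : ∀ P ∈ [(⟨1, α - β, 1⟩ : PowTerm)], P.Nonneg := by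
    simp [PowTerm.Nonneg, hαβ]
  have hiter : ∀ m : ℕ, ∀ P ∈ (PowTerm.negDerivList α)^[m] [⟨1, α - β, 1⟩], P.Nonneg := by
    intro m
    induction m with
    | zero => exact hbase
    | succ m ih =>
      rw [Function.iterate_succ_apply']
      exact PowTerm.Nonneg.negDerivList hα0.le hα1 ih
  rw [laplaceDeriv_eq_evalSum hα0 hα1 (hα0.trans_le hαβ) hβ1 hl n hs]
  exact PowTerm.evalSum_nonneg (hiter n) hl.le hs0

/-- Gauss's product approximating `1 / Γ(β)`. -/
noncomputable def invGammaSeq (n : ℕ) (β : ℝ) : ℝ :=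
  (∏ j ∈ Finset.range n, (β + j)) / (n.factorial * (n : ℝ) ^ (β - 1))

theorem invGammaSeq_nonneg (hβ : 0 < β) (n : ℕ) : 0 ≤ invGammaSeq n β :=
  div_nonneg (Finset.prod_nonneg fun j _ => by positivity) (by positivity)

theorem tendsto_invGammaSeq (hβ : 0 < β) :
    Tendsto (invGammaSeq · β) atTop (𝓝 (Gamma β)⁻¹) := by
  have h := (tendsto_natCast_div_add_atTop β).mul
    ((GammaSeq_tendsto_Gamma β).inv₀ (Gamma_pos_of_pos hβ).ne')
  rw [one_mul] at h
  refine h.congr' ?_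
  filter_upwards [eventually_gt_atTop 0] with n hn
  have hn0 : (0 : ℝ) < n := by exact_mod_cast hn
  have hprod : 0 < ∏ j ∈ Finset.range n, (β + j) := Finset.prod_pos fun j _ => by positivity
  rw [GammaSeq, Finset.prod_range_succ, invGammaSeq, rpow_sub_one hn0.ne']
  field_simp
  ring

theorem invGammaSeq_succ_mul {n : ℕ} (hn : 0 < n) (β : ℝ) :
    invGammaSeq (n + 1) β * ((n : ℝ) + 1) ^ β
      = invGammaSeq n β * ((β + n) * (n : ℝ) ^ (β - 1)) := by
  have hn0 : (0 : ℝ) < n := by exact_mod_cast hn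
  rw [invGammaSeq, invGammaSeq, Finset.prod_range_succ, Nat.factorial_succ]
  push_cast
  rw [rpow_sub_one (by positivity), rpow_sub_one hn0.ne']
  field_simp

theorem rpow_add_one_eq_mul (β : ℝ) {x : ℝ} (hx : 0 < x) :
    (x + 1) ^ β = x ^ β * (1 + 1 / x) ^ β := by
  rw [← mul_rpow hx.le (by positivity)]
  field_simp

theorem add_mul_rpow_sub_one_eq_mul (β : ℝ) {x : ℝ} (hx : 0 < x) :
    (β + x) * x ^ (β - 1) = x ^ β * (1 + β * (1 / x)) := by
  rw [rpow_sub hx, rpow_one]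
  field_simp
  ring

theorem invGammaSeq_le_of_le (hβ : 1 ≤ β) {N n : ℕ} (hN : 0 < N) (hn : N ≤ n) :
    invGammaSeq n β ≤ invGammaSeq N β := by
  induction n, hn using Nat.le_induction with
  | base => exact le_rfl
  | succ n hNn ih =>
    have hn0 : (0 : ℝ) < n := by exact_mod_cast hN.trans_le hNn
    have hbern : (β + n) * (n : ℝ) ^ (β - 1) ≤ ((n : ℝ) + 1) ^ β := by
      rw [add_mul_rpow_sub_one_eq_mul β hn0, rpow_add_one_eq_mul β hn0]
      gcongr
      exact one_add_mul_self_le_rpow_one_add (by linarith [one_div_pos.2 hn0]) hβ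
    refine le_trans ?_ ih
    refine le_of_mul_le_mul_right ?_ (by positivity : (0 : ℝ) < ((n : ℝ) + 1) ^ β)
    rw [invGammaSeq_succ_mul (hN.trans_le hNn)]
    gcongr
    exact invGammaSeq_nonneg (by linarith) n

theorem invGammaSeq_le_inv_Gamma (hβ0 : 0 < β) (hβ1 : β ≤ 1) {n : ℕ} (hn : 0 < n) :
    invGammaSeq n β ≤ (Gamma β)⁻¹ := by
  have hmono : Monotone fun m : ℕ => invGammaSeq (m + 1) β := by
    refine monotone_nat_of_le_succ fun m => ?_
    have hm0 : (0 : ℝ) < m + 1 := by positivity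
    have hbern : (((m + 1 : ℕ) : ℝ) + 1) ^ β ≤ (β + (m + 1 : ℕ)) * ((m + 1 : ℕ) : ℝ) ^ (β - 1) := by
      push_cast
      rw [add_mul_rpow_sub_one_eq_mul β hm0, rpow_add_one_eq_mul β hm0]
      gcongr
      exact rpow_one_add_le_one_add_mul_self (by linarith [one_div_pos.2 hm0]) hβ0.le hβ1
    refine le_of_mul_le_mul_right ?_ (by positivity : (0 : ℝ) < (((m + 1 : ℕ) : ℝ) + 1) ^ β)
    rw [invGammaSeq_succ_mul m.succ_pos]
    gcongr
    exact invGammaSeq_nonneg hβ0 _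
  obtain ⟨m, rfl⟩ := Nat.exists_eq_add_of_lt hn
  simpa [add_comm] using hmono.ge_of_tendsto
    ((tendsto_add_atTop_iff_nat 1).2 (tendsto_invGammaSeq hβ0)) m

theorem invGammaSeq_le_max (hβ : 0 < β) {N n : ℕ} (hN : 0 < N) (hn : N ≤ n) :
    invGammaSeq n β ≤ max (Gamma β)⁻¹ (invGammaSeq N β) := by
  rcases le_total β 1 with hβ1 | hβ1
  · exact (invGammaSeq_le_inv_Gamma hβ hβ1 (hN.trans_le hn)).trans (le_max_left _ _)
  · exact (invGammaSeq_le_of_le hβ1 hN hn).trans (le_max_right _ _)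

theorem laplaceTerm_self_eq {n : ℕ} (hn : 0 < n) (k : ℕ) :
    (n : ℝ) ^ (n + 1) / n.factorial * laplaceTerm α β l n n k
      = (-l) ^ k * invGammaSeq n (α * k + β) := by
  have hn0 : (0 : ℝ) < n := by exact_mod_cast hn
  have hpow : (n : ℝ) ^ (n + 1) * (n : ℝ) ^ (-(α * k + β + n)) * (n : ℝ) ^ (α * k + β - 1) = 1 := by
    rw [← rpow_natCast, ← rpow_add hn0, ← rpow_add hn0]
    push_cast
    ring_nf
    exact rpow_zero _
  rw [laplaceTerm, invGammaSeq]
  field_simp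
  linear_combination (-l) ^ k * (∏ j ∈ Finset.range n, (α * k + β + j)) * hpow

theorem tendsto_tsum_invGammaSeq (hα0 : 0 < α) (hα1 : α < 1) (hβ0 : 0 < β) (hβ1 : β ≤ 1)
    (hl : 0 < l) :
    Tendsto (fun n : ℕ => ∑' k : ℕ, (-l) ^ k * invGammaSeq n (α * k + β)) atTop
      (𝓝 (mlE₂ α β (-l))) := by
  set N := ⌈l ^ α⁻¹⌉₊ + 1
  have hN : 0 < N := Nat.succ_pos _
  have hlN : l ^ α⁻¹ < N := Nat.lt_of_ceil_lt (Nat.lt_succ_self _)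
  have hb : ∀ k : ℕ, 0 < α * k + β := fun k => by positivity
  have habs : ∀ n k : ℕ,
      ‖(-l) ^ k * invGammaSeq n (α * k + β)‖ = l ^ k * invGammaSeq n (α * k + β) := by
    intro n k
    rw [norm_mul, norm_pow, norm_neg, norm_of_nonneg hl.le,
      norm_of_nonneg (invGammaSeq_nonneg (hb k) n)]
  have hsumN : Summable fun k : ℕ => l ^ k * invGammaSeq N (α * k + β) := by
    refine (((summable_laplaceTerm hα0 hα1.le hβ0 hβ1 hl hlN N).mul_left
      ((N : ℝ) ^ (N + 1) / N.factorial)).norm).congr fun k => ?_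
    rw [laplaceTerm_self_eq hN, habs]
  have hlim : mlE₂ α β (-l) = ∑' k : ℕ, (-l) ^ k * (Gamma (α * k + β))⁻¹ := by
    simp only [mlE₂, div_eq_mul_inv]
  rw [hlim]
  refine tendsto_tsum_of_dominated_convergence
    (bound := fun k => l ^ k / Gamma (α * k + β) + l ^ k * invGammaSeq N (α * k + β))
    ((summable_mlE₂ hα0 hα1 hβ0 l).add hsumN)
    (fun k => (tendsto_invGammaSeq (hb k)).const_mul _) ?_
  filter_upwards [eventually_ge_atTop N] with n hn k
  rw [habs, div_eq_mul_inv, ← mul_add]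
  refine mul_le_mul_of_nonneg_left ((invGammaSeq_le_max (hb k) hN hn).trans ?_) (by positivity)
  exact max_le_add_of_nonneg (inv_nonneg.2 (Gamma_pos_of_pos (hb k)).le)
    (invGammaSeq_nonneg (hb k) N)

theorem mlE₂_neg_nonneg (hα0 : 0 < α) (hα1 : α < 1) (hαβ : α ≤ β) (hβ1 : β ≤ 1) (hl : 0 < l) :
    0 ≤ mlE₂ α β (-l) := by
  refine ge_of_tendsto (tendsto_tsum_invGammaSeq hα0 hα1 (hα0.trans_le hαβ) hβ1 hl) ?_
  filter_upwards [eventually_gt_atTop ⌈l ^ α⁻¹⌉₊] with n hn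
  rw [← tsum_congr (laplaceTerm_self_eq (Nat.zero_lt_of_lt hn)), tsum_mul_left]
  exact mul_nonneg (by positivity)
    (laplaceDeriv_nonneg hα0 hα1.le hαβ hβ1 hl n (Nat.lt_of_ceil_lt hn))

theorem mlE₂_nonneg_of_nonpos (hα0 : 0 < α) (hα1 : α < 1) (hαβ : α ≤ β) (hβ1 : β ≤ 1)
    {x : ℝ} (hx : x ≤ 0) : 0 ≤ mlE₂ α β x := by
  rcases hx.lt_or_eq with hx | rfl
  · simpa using mlE₂_neg_nonneg hα0 hα1 hαβ hβ1 (neg_pos.2 hx)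
  · rw [mlE₂, tsum_eq_single 0 fun k hk => by simp [hk]]
    simpa using (Gamma_pos_of_pos (hα0.trans_le hαβ)).le

theorem continuous_mlE_neg_mul_rpow (hα0 : 0 < α) (hα1 : α < 1) (l : ℝ) :
    Continuous fun u => mlE α (-l * u ^ α) :=
  (continuous_mlE₂ hα0 hα1 one_pos).comp (continuous_const.mul (continuous_rpow_const hα0.le))

theorem intervalIntegrable_rpow_mul_mlE₂ (hα0 : 0 < α) (hα1 : α < 1) (l T : ℝ) :
    IntervalIntegrable (fun u => l * u ^ (α - 1) * mlE₂ α α (-l * u ^ α)) volume 0 T :=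
  ((intervalIntegral.intervalIntegrable_rpow' (by linarith)).const_mul l).mul_continuousOn
    ((continuous_mlE₂ hα0 hα1 hα0).comp
      (continuous_const.mul (continuous_rpow_const hα0.le))).continuousOn

theorem integral_kernel_mul_deriv_le {K ρ f f' : ℝ → ℝ} {a t : ℝ} (hat : a ≤ t)
    (hK : ContinuousOn K (Icc 0 (t - a))) (hKρ : ∀ u ∈ Ioo 0 (t - a), HasDerivAt K (-ρ u) u)
    (hρ : ∀ u ∈ Icc 0 (t - a), 0 ≤ ρ u) (hρi : IntervalIntegrable ρ volume 0 (t - a))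
    (hf : ContinuousOn f (Icc a t)) (hf' : ∀ s ∈ Ioo a t, HasDerivAt f (f' s) s)
    (hf'i : IntervalIntegrable f' volume a t) (hmin : ∀ s ∈ Icc a t, f t ≤ f s) :
    ∫ s in a..t, K (t - s) * f' s ≤ K (t - a) * (f t - f a) := by
  have hmaps : ∀ s ∈ Icc a t, t - s ∈ Icc 0 (t - a) := fun s hs =>
    ⟨by linarith [hs.2], by linarith [hs.1]⟩
  have hu : ContinuousOn (fun s => K (t - s)) (uIcc a t) := by
    rw [uIcc_of_le hat]
    exact hK.comp (continuousOn_const.sub continuousOn_id) hmaps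
  have hv : ContinuousOn (fun s => f s - f t) (uIcc a t) := by
    rw [uIcc_of_le hat]
    exact hf.sub continuousOn_const
  have huu' : ∀ s ∈ Ioo (min a t) (max a t), HasDerivAt (fun s => K (t - s)) (ρ (t - s)) s := by
    rw [min_eq_left hat, max_eq_right hat]
    intro s hs
    exact ((hKρ (t - s) ⟨by linarith [hs.2], by linarith [hs.1]⟩).comp s
      ((hasDerivAt_id s).const_sub t)).congr_deriv (by ring)
  have hvv' : ∀ s ∈ Ioo (min a t) (max a t), HasDerivAt (fun s => f s - f t) (f' s) s := by
    rw [min_eq_left hat, max_eq_right hat]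
    exact fun s hs => (hf' s hs).sub_const _
  have hρi' : IntervalIntegrable (fun s => ρ (t - s)) volume a t := by
    simpa using (hρi.comp_sub_left t).symm
  have hrest : 0 ≤ ∫ s in a..t, ρ (t - s) * (f s - f t) :=
    intervalIntegral.integral_nonneg hat fun s hs =>
      mul_nonneg (hρ _ (hmaps s hs)) (sub_nonneg.2 (hmin s hs))
  rw [intervalIntegral.integral_mul_deriv_eq_deriv_mul_of_hasDerivAt hu hv huu' hvv' hρi' hf'i]
  simp only [sub_self, mul_zero, zero_sub]
  linarith [show K (t - a) * (f t - f a) = -(K (t - a) * (f a - f t)) by ring]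

theorem MemH1.intervalIntegrable_deriv {a b : ℝ} {f : ℝ → ℝ} (hf : MemH1 a b f) {c d : ℝ}
    (hac : a ≤ c) (hcd : c ≤ d) (hdb : d ≤ b) : IntervalIntegrable (deriv f) volume c d := by
  have hL2 : MemLp (deriv f) 2 (volume.restrict (Ioo a b)) :=
    (memLp_two_iff_integrable_sq (measurable_deriv f).aestronglyMeasurable).2 hf.2.2
  exact (intervalIntegrable_iff_integrableOn_Ioo_of_le hcd).2
    (IntegrableOn.mono_set (hL2.integrable one_le_two) (Ioo_subset_Ioo hac hdb))

end MittagLeffler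

open MittagLeffler

theorem abc_deriv_at_min_general (a b α Bα : ℝ) (hα1 : 0 < α) (hα2 : α < 1)
    (hB : 0 < Bα) (f : ℝ → ℝ) (hf : MemH1 a b f)
    (t0 : ℝ) (ht0 : t0 ∈ Set.Icc a b) (hmin : ∀ t ∈ Set.Icc a b, f t0 ≤ f t) :
    abc Bα α a f t0 ≤ Bα / (1 - α) * mlE α (-(α / (1 - α)) * (t0 - a) ^ α) * (f t0 - f a) ∧
      Bα / (1 - α) * mlE α (-(α / (1 - α)) * (t0 - a) ^ α) * (f t0 - f a) ≤ 0 := by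
  obtain ⟨hat0, ht0b⟩ := ht0
  set l := α / (1 - α)
  have hl : 0 < l := div_pos hα1 (sub_pos.2 hα2)
  have hc : 0 < Bα / (1 - α) := div_pos hB (sub_pos.2 hα2)
  have harg : ∀ u, 0 ≤ u → -l * u ^ α ≤ 0 := fun u hu =>
    mul_nonpos_of_nonpos_of_nonneg (neg_nonpos.2 hl.le) (rpow_nonneg hu α)
  have hK : 0 ≤ mlE α (-l * (t0 - a) ^ α) :=
    mlE₂_nonneg_of_nonpos hα1 hα2 hα2.le le_rfl (harg _ (sub_nonneg.2 hat0))
  have hfa : f t0 ≤ f a := hmin a ⟨le_rfl, hat0.trans ht0b⟩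
  refine ⟨?_, mul_nonpos_of_nonneg_of_nonpos (mul_nonneg hc.le hK) (sub_nonpos.2 hfa)⟩
  rw [abc, mul_assoc]
  refine mul_le_mul_of_nonneg_left (integral_kernel_mul_deriv_le hat0
    (continuous_mlE_neg_mul_rpow hα1 hα2 l).continuousOn
    (fun u hu => hasDerivAt_mlE_neg_mul_rpow hα1 hα2 l hu.1)
    (fun u hu => mul_nonneg (mul_nonneg hl.le (rpow_nonneg hu.1 _))
      (mlE₂_nonneg_of_nonpos hα1 hα2 le_rfl hα2.le (harg u hu.1)))
    (intervalIntegrable_rpow_mul_mlE₂ hα1 hα2 l _)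
    (hf.1.mono (Icc_subset_Icc_right ht0b))
    (fun s hs => (hf.2.1.differentiableAt
      (Ioo_mem_nhds hs.1 (hs.2.trans_le ht0b))).hasDerivAt)
    (hf.intervalIntegrable_deriv le_rfl hat0 ht0b)
    (fun s hs => hmin s ⟨hs.1, hs.2.trans ht0b⟩)) hc.le

/-- ABC derivative at a minimum point is bounded above. -/
theorem abc_deriv_at_min (a b α Bα : ℝ) (hab : a < b) (hα1 : 0 < α) (hα2 : α < 1)
    (hB : 0 < Bα) (f : ℝ → ℝ) (hf : MemH1 a b f)
    (t0 : ℝ) (ht0 : t0 ∈ Set.Icc a b) (hmin : ∀ t ∈ Set.Icc a b, f t0 ≤ f t) :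
    abc Bα α a f t0 ≤ Bα / (1 - α) * mlE α (-(α / (1 - α)) * (t0 - a) ^ α) * (f t0 - f a) ∧
      Bα / (1 - α) * mlE α (-(α / (1 - α)) * (t0 - a) ^ α) * (f t0 - f a) ≤ 0 :=
  abc_deriv_at_min_general a b α Bα hα1 hα2 hB f hf t0 ht0 hmin
end

section
/- Necessary condition for solvability: if u ∈ H^1(0,b) ∩ C[0,b] solves (ABC_0 D^α u)(t) = λ u(t) + f(t) for t > 0 with u(0) = u_0, where 0 < α < 1, λ ∈ ℝ, and f is continuous, then λ u_0 + f(0) = 0. -/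
open MeasureTheory Real Set

/-! The ABC derivative of `u` at `t` integrates a kernel that is bounded on `[0, b]` against
`u' ∈ L¹(0, b)` over `[0, t]`, so it tends to `0` as `t → 0⁺`; letting `t → 0⁺` in the
equation and using the continuity of `u` and `f` at `0` gives `λ u₀ + f 0 = 0`. The kernel is
bounded because `|E_α(z)| ≤ E_α(|z|)`, the Mittag-Leffler series converging everywhere since
`Γ(αk + 1)` outgrows every geometric sequence. -/

open Filter Topology

namespace Real

theorem eventually_rpow_sub_one_le_Gamma_add_one {y : ℝ} (hy : 1 ≤ y) :
    ∀ᶠ s in atTop, y ^ (s - 1) ≤ Gamma (s + 1) := by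
  have hfactorial : ∀ᶠ n : ℕ in atTop, y ^ n ≤ n.factorial := by
    filter_upwards [(FloorSemiring.tendsto_pow_div_factorial_atTop y).eventually_lt_const one_pos]
      with n hn
    exact ((div_lt_one (by positivity)).mp hn).le
  filter_upwards [tendsto_nat_floor_atTop.eventually hfactorial, eventually_ge_atTop 1]
    with s hs hs1
  have hfloor_le : (⌊s⌋₊ : ℝ) ≤ s := Nat.floor_le (zero_le_one.trans hs1)
  have hlt_floor : s < ⌊s⌋₊ + 1 := Nat.lt_floor_add_one s
  have hfloor_one : (1 : ℝ) ≤ ⌊s⌋₊ := by exact_mod_cast Nat.one_le_floor_iff _ |>.mpr hs1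
  calc y ^ (s - 1) ≤ y ^ (⌊s⌋₊ : ℝ) := rpow_le_rpow_of_exponent_le hy (by linarith)
    _ ≤ (⌊s⌋₊.factorial : ℝ) := by rwa [rpow_natCast]
    _ = Gamma (⌊s⌋₊ + 1) := (Gamma_nat_eq_factorial _).symm
    _ ≤ Gamma (s + 1) :=
      Gamma_strictMonoOn_Ici.monotoneOn (mem_Ici.2 (by linarith)) (mem_Ici.2 (by linarith))
        (by linarith)

end Real

theorem summable_pow_div_Gamma {α : ℝ} (hα : 0 < α) (x : ℝ) :
    Summable fun k : ℕ => x ^ k / Gamma (α * k + 1) := by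
  set q := 2 * |x| + 1
  set y := q ^ α⁻¹
  have hq : 1 ≤ q := by linarith [abs_nonneg x]
  have hy : 1 ≤ y := one_le_rpow hq (inv_nonneg.2 hα.le)
  -- Since `y ^ α = q`, the growth of `Γ` gives `Γ(αk + 1) ≥ q ^ k / y`.
  have hgeom : Summable fun k : ℕ => y * (|x| / q) ^ k :=
    (summable_geometric_of_lt_one (by positivity)
      ((div_lt_one (by linarith)).2 (by linarith))).mul_left y
  refine summable_of_isBigO_nat hgeom (Asymptotics.IsBigO.of_bound 1 ?_)
  filter_upwards [(tendsto_natCast_atTop_atTop.const_mul_atTop hα).eventually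
    (eventually_rpow_sub_one_le_Gamma_add_one hy)] with k hk
  have hyk : y ^ (α * k - 1) = q ^ k / y := by
    rw [rpow_sub (by positivity), rpow_one, ← rpow_mul (by positivity),
      inv_mul_cancel_left₀ hα.ne', rpow_natCast]
  rw [hyk] at hk
  have hΓ : 0 < Gamma (α * k + 1) := Gamma_pos_of_pos (by positivity)
  calc ‖x ^ k / Gamma (α * k + 1)‖ = |x| ^ k / Gamma (α * k + 1) := by
        rw [norm_div, norm_pow, Real.norm_eq_abs, norm_of_nonneg hΓ.le]
    _ ≤ |x| ^ k / (q ^ k / y) := by gcongr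
    _ = y * (|x| / q) ^ k := by rw [div_pow]; field_simp
    _ ≤ 1 * ‖y * (|x| / q) ^ k‖ := by rw [one_mul]; exact le_norm_self _

theorem abs_mlE_le {α c z : ℝ} (hα : 0 < α) (hz : |z| ≤ c) : |mlE α z| ≤ mlE α c := by
  rw [← Real.norm_eq_abs]
  refine tsum_of_norm_bounded (summable_pow_div_Gamma hα c).hasSum fun k => ?_
  rw [norm_div, norm_pow, norm_of_nonneg (Gamma_pos_of_pos (by positivity)).le, Real.norm_eq_abs]
  gcongr

theorem tendsto_integral_kernel_mul_nhdsGT {a b M : ℝ} {g : ℝ → ℝ} {K : ℝ → ℝ → ℝ}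
    (hab : a < b) (hg : IntegrableOn g (Ioc a b))
    (hK : ∀ t ∈ Ioc a b, ∀ s ∈ Ioc a t, |K t s| ≤ M) :
    Tendsto (fun t => ∫ s in a..t, K t s * g s) (𝓝[>] a) (𝓝 0) := by
  have hprimitive : Tendsto (fun t => ∫ s in a..t, |g s|) (𝓝[>] a) (𝓝 0) := by
    have hcont := intervalIntegral.continuousWithinAt_primitive (μ := volume) (a := a) (b₁ := a)
      (b₂ := b) (b₀ := a) (f := fun s => |g s|) (measure_singleton a)
      (by rw [min_self, max_eq_right hab.le, intervalIntegrable_iff_integrableOn_Ioc_of_le hab.le]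
          exact hg.abs)
    simpa using (hcont.mono_of_mem_nhdsWithin (Icc_mem_nhdsGT hab)).tendsto
  refine squeeze_zero_norm' ?_ (by simpa using hprimitive.const_mul M)
  filter_upwards [Ioc_mem_nhdsGT hab] with t ht
  have hgt : IntegrableOn g (Ioc a t) := hg.mono_set (Ioc_subset_Ioc_right ht.2)
  rw [← intervalIntegral.integral_const_mul]
  refine intervalIntegral.norm_integral_le_of_norm_le ht.1.le (ae_of_all _ fun s hs => ?_)
    ((intervalIntegrable_iff_integrableOn_Ioc_of_le ht.1.le).2 (hgt.abs.const_mul M))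
  rw [norm_mul, Real.norm_eq_abs, Real.norm_eq_abs]
  exact mul_le_mul_of_nonneg_right (hK t ht s hs) (abs_nonneg _)

theorem tendsto_abc_nhdsGT {Bα α a b : ℝ} {u : ℝ → ℝ} (hα : 0 < α) (hab : a < b)
    (hu : IntegrableOn (deriv u) (Ioc a b)) :
    Tendsto (abc Bα α a u) (𝓝[>] a) (𝓝 0) := by
  have hkernel : ∀ t ∈ Ioc a b, ∀ s ∈ Ioc a t,
      |mlE α (-(α / (1 - α)) * (t - s) ^ α)| ≤ mlE α (|α / (1 - α)| * (b - a) ^ α) := by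
    intro t ht s hs
    refine abs_mlE_le hα ?_
    rw [abs_mul, abs_neg, abs_of_nonneg (rpow_nonneg (by linarith [hs.2]) α)]
    gcongr <;> linarith [hs.1, hs.2, ht.2]
  rw [← mul_zero (Bα / (1 - α))]
  exact (tendsto_integral_kernel_mul_nhdsGT hab hu hkernel).const_mul _

theorem MemH1.integrableOn_deriv {a b : ℝ} {u : ℝ → ℝ} (hu : MemH1 a b u) :
    IntegrableOn (deriv u) (Ioc a b) := by
  rw [integrableOn_Ioc_iff_integrableOn_Ioo]
  have hL2 := (memLp_two_iff_integrable_sq (measurable_deriv u).aestronglyMeasurable).2 hu.2.2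
  exact hL2.integrable one_le_two

theorem necessary_condition_general (b α Bα lam u₀ : ℝ) (hb : 0 < b) (hα1 : 0 < α)
    (u f : ℝ → ℝ) (hu : MemH1 0 b u)
    (hf : ContinuousOn f (Set.Icc 0 b))
    (heq : ∀ t ∈ Set.Ioc (0:ℝ) b, abc Bα α 0 u t = lam * u t + f t)
    (hu0 : u 0 = u₀) :
    lam * u₀ + f 0 = 0 := by
  have h0 : (0 : ℝ) ∈ Icc 0 b := left_mem_Icc.2 hb.le
  have hrhs : Tendsto (fun t => lam * u t + f t) (𝓝[>] 0) (𝓝 (lam * u₀ + f 0)) := by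
    rw [← hu0]
    exact (((hu.1 0 h0).const_mul lam).add (hf 0 h0)).mono_of_mem_nhdsWithin
      (Icc_mem_nhdsGT hb) |>.tendsto
  have hlhs := tendsto_abc_nhdsGT (Bα := Bα) hα1 hb hu.integrableOn_deriv
  refine tendsto_nhds_unique hrhs (hlhs.congr' ?_)
  filter_upwards [Ioc_mem_nhdsGT hb] with t ht using heq t ht

/-- necessary condition for solvability of the linear equation. -/
theorem necessary_condition (b α Bα lam u₀ : ℝ) (hb : 0 < b) (hα1 : 0 < α) (hα2 : α < 1)
    (hB : 0 < Bα) (u f : ℝ → ℝ) (hu : MemH1 0 b u)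
    (hf : ContinuousOn f (Set.Icc 0 b))
    (heq : ∀ t ∈ Set.Ioc (0:ℝ) b, abc Bα α 0 u t = lam * u t + f t)
    (hu0 : u 0 = u₀) :
    lam * u₀ + f 0 = 0 :=
  necessary_condition_general b α Bα lam u₀ hb hα1 u f hu hf heq hu0
end

section
/- Uniqueness for the nonlinear equation: if f(t,u) is smooth and non-increasing in u (i.e., ∂f/∂u ≤ 0, with strict inequality ∂f/∂u < 0), then the equation (ABC_a D^α u)(t) = f(t, u(t)) for t > a, 0 < α < 1, has at most one solution u ∈ H^1(a,b) ∩ C[a,b]. -/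
open MeasureTheory Real Set

open Filter FormalMultilinearSeries
open scoped Topology

section MLEaux
variable {α : ℝ}

noncomputable def mlC (α : ℝ) : ℕ → ℝ := fun n => 1 / Real.Gamma (α * n + 1)

lemma mlGamma_pos (hα1 : 0 < α) (n : ℕ) : 0 < Real.Gamma (α * n + 1) :=
  Real.Gamma_pos_of_pos (by positivity)

lemma gamma_ratio_le (hα1 : 0 < α) (hα2 : α < 1) {x : ℝ} (hx : 1 ≤ x) :
    Real.Gamma x / Real.Gamma (x + α) ≤ 2 ^ (1 - α) * x ^ (-α) := by
  have hx0 : (0:ℝ) < x := lt_of_lt_of_le one_pos hx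
  have hxα : (0:ℝ) < x + α := by linarith
  have hconv := Real.convexOn_log_Gamma.2 (mem_Ioi.2 hxα)
    (mem_Ioi.2 (by linarith : (0:ℝ) < x + 1 + α))
    (le_of_lt hα1) (by linarith : (0:ℝ) ≤ 1 - α) (by ring)
  have hcomb : α • (x + α) + (1 - α) • (x + 1 + α) = x + 1 := by
    simp [smul_eq_mul]; ring
  rw [hcomb] at hconv
  simp only [Function.comp_apply, smul_eq_mul] at hconv
  have h1 : Real.Gamma (x + 1) = x * Real.Gamma x := Real.Gamma_add_one (ne_of_gt hx0)
  have h2 : Real.Gamma (x + 1 + α) = (x + α) * Real.Gamma (x + α) := by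
    rw [show x + 1 + α = (x + α) + 1 by ring, Real.Gamma_add_one (ne_of_gt hxα)]
  have hGx : 0 < Real.Gamma x := Real.Gamma_pos_of_pos hx0
  have hGxα : 0 < Real.Gamma (x + α) := Real.Gamma_pos_of_pos hxα
  rw [h1, h2, Real.log_mul (ne_of_gt hx0) (ne_of_gt hGx),
    Real.log_mul (ne_of_gt hxα) (ne_of_gt hGxα)] at hconv
  have key : Real.log (Real.Gamma x / Real.Gamma (x + α))
      ≤ (1 - α) * Real.log (x + α) - Real.log x := by
    rw [Real.log_div (ne_of_gt hGx) (ne_of_gt hGxα)]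
    nlinarith [hconv]
  have hle : Real.Gamma x / Real.Gamma (x + α) ≤ (x + α) ^ (1 - α) / x := by
    have := Real.exp_le_exp.2 key
    rw [Real.exp_log (div_pos hGx hGxα)] at this
    refine this.trans (le_of_eq ?_)
    rw [Real.exp_sub, Real.exp_log hx0, Real.rpow_def_of_pos hxα, mul_comm]
  refine hle.trans ?_
  have h2x : x + α ≤ 2 * x := by linarith
  have hpow : (x + α) ^ (1 - α) ≤ (2 * x) ^ (1 - α) :=
    Real.rpow_le_rpow (le_of_lt hxα) h2x (by linarith)
  calc (x + α) ^ (1 - α) / x ≤ (2 * x) ^ (1 - α) / x := by gcongr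
    _ = 2 ^ (1 - α) * x ^ (-α) := by
        rw [Real.mul_rpow (by norm_num) (le_of_lt hx0), mul_div_assoc]
        congr 1
        rw [show (1:ℝ) - α = -α + 1 by ring, Real.rpow_add hx0, Real.rpow_one,
          mul_div_assoc, div_self (ne_of_gt hx0), mul_one]

lemma mlC_ratio_tendsto (hα1 : 0 < α) (hα2 : α < 1) :
    Tendsto (fun n => ‖mlC α (n + 1)‖ / ‖mlC α n‖) atTop (𝓝 0) := by
  have hb : ∀ n : ℕ, ‖mlC α (n + 1)‖ / ‖mlC α n‖ ≤ 2 ^ (1 - α) * (α * n + 1) ^ (-α) := by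
    intro n
    have h1 := mlGamma_pos hα1 n
    have h2 := mlGamma_pos hα1 (n + 1)
    have heq : ‖mlC α (n + 1)‖ / ‖mlC α n‖
        = Real.Gamma (α * n + 1) / Real.Gamma ((α * n + 1) + α) := by
      simp only [mlC, norm_div, Real.norm_eq_abs, abs_of_pos h1, abs_of_pos h2, abs_one]
      rw [show α * ((n : ℕ) + 1 : ℕ) + 1 = (α * n + 1) + α by push_cast; ring]
      field_simp
    rw [heq]
    exact gamma_ratio_le hα1 hα2 (le_add_of_nonneg_left (by positivity))
  have hnn : ∀ n : ℕ, 0 ≤ ‖mlC α (n + 1)‖ / ‖mlC α n‖ := fun n => by positivity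
  have hg : Tendsto (fun n : ℕ => 2 ^ (1 - α) * (α * n + 1) ^ (-α)) atTop (𝓝 0) := by
    have h1 : Tendsto (fun n : ℕ => α * n + 1) atTop atTop := by
      apply tendsto_atTop_add_const_right
      exact (tendsto_natCast_atTop_atTop (R := ℝ)).const_mul_atTop hα1
    have h2 : Tendsto (fun x : ℝ => x ^ (-α)) atTop (𝓝 0) := tendsto_rpow_neg_atTop hα1
    have := (h2.comp h1).const_mul ((2:ℝ) ^ (1 - α))
    simpa using this
  exact squeeze_zero hnn hb hg

lemma mlE_eq_sum : mlE α = (ofScalars ℝ (mlC α)).sum := by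
  funext x
  simp only [mlE, FormalMultilinearSeries.sum]
  refine tsum_congr fun n => ?_
  rw [ofScalars_apply_eq]
  simp [mlC, smul_eq_mul, div_eq_mul_inv, mul_comm]

lemma mlE_radius (hα1 : 0 < α) (hα2 : α < 1) : (ofScalars ℝ (mlC α)).radius = ⊤ := by
  refine ofScalars_radius_eq_top_of_tendsto ℝ (mlC α) ?_ ?_
  · exact Eventually.of_forall fun n => by
      simp [mlC, ne_of_gt (mlGamma_pos hα1 n)]
  · exact mlC_ratio_tendsto hα1 hα2

lemma mlE_contDiff (hα1 : 0 < α) (hα2 : α < 1) : ContDiff ℝ (⊤ : ℕ∞) (mlE α) := by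
  rw [mlE_eq_sum]
  refine contDiff_iff_contDiffAt.2 fun x => ?_
  have h := (ofScalars ℝ (mlC α)).hasFPowerSeriesOnBall (by rw [mlE_radius hα1 hα2]; simp)
  have hx : x ∈ Metric.eball (0:ℝ) (ofScalars ℝ (mlC α)).radius := by
    rw [mlE_radius hα1 hα2]; simp [Metric.mem_eball, edist_lt_top]
  exact (h.analyticAt_of_mem hx).contDiffAt

lemma mlE_cont (hα1 : 0 < α) (hα2 : α < 1) : Continuous (mlE α) :=
  (mlE_contDiff hα1 hα2).continuous

lemma mlE_deriv_cont (hα1 : 0 < α) (hα2 : α < 1) : Continuous (deriv (mlE α)) :=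
  (mlE_contDiff hα1 hα2).continuous_deriv (by simp)

lemma mlE_zero : mlE α 0 = 1 := by
  rw [mlE, tsum_eq_single 0 (fun k hk => by simp [zero_pow hk])]
  simp [Real.Gamma_one]

lemma rpow_cont (hα1 : 0 < α) : Continuous (fun x : ℝ => x ^ α) :=
  continuous_iff_continuousAt.2 fun x => Real.continuousAt_rpow_const x α (Or.inr hα1.le)

lemma ker_cont (hα1 : 0 < α) (hα2 : α < 1) (c t : ℝ) :
    Continuous (fun s => mlE α (-c * (t - s) ^ α)) :=
  (mlE_cont hα1 hα2).comp
    (continuous_const.mul ((rpow_cont hα1).comp (continuous_const.sub continuous_id)))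

lemma kerDeriv_cont (hα1 : 0 < α) (hα2 : α < 1) (c t : ℝ) :
    Continuous (fun s => deriv (mlE α) (-c * (t - s) ^ α)) :=
  (mlE_deriv_cont hα1 hα2).comp
    (continuous_const.mul ((rpow_cont hα1).comp (continuous_const.sub continuous_id)))

lemma ker_hasDerivAt (hα1 : 0 < α) (hα2 : α < 1) (c t s : ℝ) (hs : s < t) :
    HasDerivAt (fun x => mlE α (-c * (t - x) ^ α))
      (deriv (mlE α) (-c * (t - s) ^ α) * (c * α * (t - s) ^ (α - 1))) s := by
  have h1 : HasDerivAt (fun x : ℝ => t - x) (-1) s := by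
    exact (hasDerivAt_id' s).const_sub t
  have h2 : HasDerivAt (fun y : ℝ => y ^ α) (α * (t - s) ^ (α - 1)) (t - s) :=
    Real.hasDerivAt_rpow_const (Or.inl (ne_of_gt (sub_pos.2 hs)))
  have h3 : HasDerivAt (fun x => (t - x) ^ α) (α * (t - s) ^ (α - 1) * (-1)) s :=
    h2.comp s h1
  have h4 : HasDerivAt (fun x => -c * (t - x) ^ α) (c * α * (t - s) ^ (α - 1)) s := by
    have := h3.const_mul (-c)
    have e : c * α * (t - s) ^ (α - 1) = -c * (α * (t - s) ^ (α - 1) * (-1)) := by ring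
    rw [e]; exact this
  have h5 : HasDerivAt (mlE α) (deriv (mlE α) (-c * (t - s) ^ α)) (-c * (t - s) ^ α) :=
    (((mlE_contDiff hα1 hα2).differentiable (by simp)) _).hasDerivAt
  exact h5.comp s h4


lemma H1_deriv_int {a b : ℝ} {u : ℝ → ℝ} (hu : MemH1 a b u) :
    IntegrableOn (deriv u) (Ioo a b) volume := by
  have hvol : volume (Ioo a b) < ⊤ := by rw [Real.volume_Ioo]; exact ENNReal.ofReal_lt_top
  have hconst : IntegrableOn (fun _ : ℝ => (1:ℝ)) (Ioo a b) volume :=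
    integrableOn_const hvol.ne
  have hg : IntegrableOn (fun s => ((deriv u s) ^ 2 + 1) / 2) (Ioo a b) volume :=
    (hu.2.2.add hconst).div_const 2
  refine Integrable.mono' hg (measurable_deriv u).aestronglyMeasurable
    (Eventually.of_forall fun s => ?_)
  simp only [Real.norm_eq_abs]
  nlinarith [sq_nonneg (|deriv u s| - 1), sq_abs (deriv u s), abs_nonneg (deriv u s)]

lemma bddcont_mul_int {a b T t : ℝ} {K g : ℝ → ℝ} (hK : Continuous K)
    (hg : IntegrableOn g (Ioo a b) volume) (hTt : T ≤ t) (haT : a ≤ T) (htb : t ≤ b) :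
    IntervalIntegrable (fun s => K s * g s) volume T t := by
  rw [intervalIntegrable_iff_integrableOn_Ioo_of_le hTt]
  have hg' : IntegrableOn g (Ioo T t) volume := hg.mono_set (Ioo_subset_Ioo haT htb)
  obtain ⟨C, hC⟩ := (isCompact_Icc (a := T) (b := t)).exists_bound_of_continuousOn
    hK.continuousOn
  exact hg'.bdd_mul hK.aestronglyMeasurable.restrict
    (((ae_restrict_iff' measurableSet_Ioo).2 (Eventually.of_forall
      fun x hx => hC x (Ioo_subset_Icc_self hx))))

lemma rpow_ker_int (hα1 : 0 < α) (T t : ℝ) :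
    IntervalIntegrable (fun s => (t - s) ^ (α - 1)) volume T t := by
  have h := (intervalIntegral.intervalIntegrable_rpow' (a := 0) (b := t - T)
    (r := α - 1) (by linarith)).comp_sub_left t
  simpa using h.symm

lemma rpow_ker_integral (hα1 : 0 < α) {T t : ℝ} (hTt : T ≤ t) :
    ∫ s in T..t, (t - s) ^ (α - 1) = (t - T) ^ α / α := by
  rw [intervalIntegral.integral_comp_sub_left (a := T) (b := t) (fun x => x ^ (α - 1)) t]
  rw [sub_self]
  rw [integral_rpow (Or.inl (by linarith : (-1:ℝ) < α - 1))]
  rw [Real.zero_rpow (by intro h; nlinarith [hα1] : α - 1 + 1 ≠ 0)]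
  ring_nf

lemma kerDeriv_int (hα1 : 0 < α) (hα2 : α < 1) (c : ℝ) {T t : ℝ} (hTt : T ≤ t)
    {z : ℝ → ℝ} (hz : ContinuousOn z (Icc T t)) :
    IntervalIntegrable
      (fun s => deriv (mlE α) (-c * (t - s) ^ α) * (c * α * (t - s) ^ (α - 1)) * z s)
      volume T t := by
  obtain ⟨C₁, hC₁⟩ := (isCompact_Icc (a := T) (b := t)).exists_bound_of_continuousOn
    (kerDeriv_cont hα1 hα2 c t).continuousOn
  obtain ⟨C₂, hC₂⟩ := (isCompact_Icc (a := T) (b := t)).exists_bound_of_continuousOn hz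
  rw [intervalIntegrable_iff_integrableOn_Ioo_of_le hTt]
  have hdom : IntegrableOn
      (fun s => ((|C₁| + 1) * (|c| * α * ((|C₂| + 1)))) * (t - s) ^ (α - 1))
      (Ioo T t) volume := by
    have := ((rpow_ker_int hα1 T t).const_mul ((|C₁| + 1) * (|c| * α * ((|C₂| + 1)))))
    rw [intervalIntegrable_iff_integrableOn_Ioo_of_le hTt] at this
    exact this
  refine Integrable.mono' hdom ?_ ?_
  · refine ContinuousOn.aestronglyMeasurable ?_ measurableSet_Ioo
    refine ContinuousOn.mul (ContinuousOn.mul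
      (kerDeriv_cont hα1 hα2 c t).continuousOn ?_) (hz.mono Ioo_subset_Icc_self)
    intro s hs
    have hne : t - s ≠ 0 := ne_of_gt (by linarith [hs.2])
    exact (continuousAt_const.mul ((Real.continuousAt_rpow_const (t - s) (α - 1)
      (Or.inl hne)).comp ((continuous_const.sub continuous_id).continuousAt))).continuousWithinAt
  · refine (ae_restrict_iff' measurableSet_Ioo).2 (Eventually.of_forall fun s hs => ?_)
    have hts : 0 ≤ t - s := by linarith [hs.2]
    have h1 : |deriv (mlE α) (-c * (t - s) ^ α)| ≤ |C₁| + 1 := by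
      have := hC₁ s (Ioo_subset_Icc_self hs)
      rw [Real.norm_eq_abs] at this
      linarith [le_abs_self C₁]
    have h2 : |z s| ≤ |C₂| + 1 := by
      have := hC₂ s (Ioo_subset_Icc_self hs)
      rw [Real.norm_eq_abs] at this
      linarith [le_abs_self C₂]
    have h3 : (0:ℝ) ≤ (t - s) ^ (α - 1) := Real.rpow_nonneg hts _
    have hB : |c * α * (t - s) ^ (α - 1)| = |c| * α * (t - s) ^ (α - 1) := by
      rw [abs_mul, abs_mul, abs_of_pos hα1, abs_of_nonneg h3]
    rw [Real.norm_eq_abs, abs_mul, abs_mul, hB]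
    calc |deriv (mlE α) (-c * (t - s) ^ α)| * (|c| * α * (t - s) ^ (α - 1)) * |z s|
        ≤ (|C₁| + 1) * (|c| * α * (t - s) ^ (α - 1)) * (|C₂| + 1) := by
          have hm : (0:ℝ) ≤ |c| * α * (t - s) ^ (α - 1) := by positivity
          gcongr
      _ = (|C₁| + 1) * (|c| * α * (|C₂| + 1)) * (t - s) ^ (α - 1) := by ring

lemma sign_abs_le {B zv h : ℝ} (hB : 0 < B) (hzh : zv * h ≤ 0) :
    B * |zv| ≤ |B * zv - h| := by
  have h1 : (B * |zv|) ^ 2 ≤ |B * zv - h| ^ 2 := by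
    rw [sq_abs, mul_pow, sq_abs]
    nlinarith [sq_nonneg h, mul_nonneg (mul_nonneg hB.le hB.le) (neg_nonneg.2 hzh)]
  have h2 : 0 ≤ B * |zv| := mul_nonneg hB.le (abs_nonneg _)
  nlinarith [abs_nonneg (B * zv - h)]

lemma ibp (hα1 : 0 < α) (hα2 : α < 1) (c : ℝ) {a b T t : ℝ}
    (haT : a ≤ T) (hTt : T < t) (htb : t ≤ b)
    {z : ℝ → ℝ} (hzc : ContinuousOn z (Icc a b))
    (hzd : ∀ x ∈ Ioo a b, DifferentiableAt ℝ z x)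
    (hz'i : IntegrableOn (deriv z) (Ioo a b) volume) (hzT : z T = 0) :
    ∫ s in T..t, mlE α (-c * (t - s) ^ α) * deriv z s
      = z t - ∫ s in T..t, deriv (mlE α) (-c * (t - s) ^ α) * (c * α * (t - s) ^ (α - 1)) * z s := by
  have hzc' : ContinuousOn z (Icc T t) := hzc.mono (Icc_subset_Icc haT htb)
  have int1 : IntervalIntegrable (fun s => mlE α (-c * (t - s) ^ α) * deriv z s) volume T t :=
    bddcont_mul_int (ker_cont hα1 hα2 c t) hz'i hTt.le haT htb
  have int2 : IntervalIntegrable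
      (fun s => deriv (mlE α) (-c * (t - s) ^ α) * (c * α * (t - s) ^ (α - 1)) * z s)
      volume T t := kerDeriv_int hα1 hα2 c hTt.le hzc'
  have hftc := intervalIntegral.integral_eq_sub_of_hasDeriv_right_of_le hTt.le
    (f := fun s => mlE α (-c * (t - s) ^ α) * z s)
    (f' := fun s => deriv (mlE α) (-c * (t - s) ^ α) * (c * α * (t - s) ^ (α - 1)) * z s
      + mlE α (-c * (t - s) ^ α) * deriv z s)
    ((ker_cont hα1 hα2 c t).continuousOn.mul hzc')
    (fun x hx => by
      have hx' : x ∈ Ioo a b := ⟨lt_of_le_of_lt haT hx.1, lt_of_lt_of_le hx.2 htb⟩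
      exact (((ker_hasDerivAt hα1 hα2 c t x hx.2).mul
        (hzd x hx').hasDerivAt)).hasDerivWithinAt)
    (int2.add int1)
  rw [intervalIntegral.integral_add int2 int1] at hftc
  simp only [sub_self, Real.zero_rpow (ne_of_gt hα1), mul_zero, neg_zero, mlE_zero, hzT,
    one_mul, zero_mul, sub_zero] at hftc
  linarith


end MLEaux

set_option maxHeartbeats 2000000 in
/-- uniqueness for the nonlinear equation with `∂f/∂u < 0`. -/
theorem nonlinear_uniqueness (a b α Bα : ℝ) (hab : a < b) (hα1 : 0 < α) (hα2 : α < 1)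
    (hB : 0 < Bα) (f : ℝ → ℝ → ℝ) (hf : ContDiff ℝ (⊤ : ℕ∞) (Function.uncurry f))
    (hdec : ∀ t u, deriv (f t) u < 0)
    (u₁ u₂ : ℝ → ℝ) (hu₁ : MemH1 a b u₁) (hu₂ : MemH1 a b u₂)
    (heq₁ : ∀ t ∈ Set.Ioc a b, abc Bα α a u₁ t = f t (u₁ t))
    (heq₂ : ∀ t ∈ Set.Ioc a b, abc Bα α a u₂ t = f t (u₂ t)) :
    ∀ t ∈ Set.Icc a b, u₁ t = u₂ t := by
  have h1α : 0 < 1 - α := by linarith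
  set c : ℝ := α / (1 - α) with hc_def
  have hc : 0 < c := div_pos hα1 h1α
  set Bc : ℝ := Bα / (1 - α) with hBc_def
  have hBc : 0 < Bc := div_pos hB h1α
  set z : ℝ → ℝ := fun t => u₁ t - u₂ t with hz_def
  have hzc : ContinuousOn z (Icc a b) := hu₁.1.sub hu₂.1
  have hd₁ : ∀ x ∈ Ioo a b, DifferentiableAt ℝ u₁ x := fun x hx =>
    (hu₁.2.1 x hx).differentiableAt (isOpen_Ioo.mem_nhds hx)
  have hd₂ : ∀ x ∈ Ioo a b, DifferentiableAt ℝ u₂ x := fun x hx =>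
    (hu₂.2.1 x hx).differentiableAt (isOpen_Ioo.mem_nhds hx)
  have hzd : ∀ x ∈ Ioo a b, DifferentiableAt ℝ z x := fun x hx =>
    ((hd₁ x hx).sub (hd₂ x hx))
  have hzderiv : ∀ x ∈ Ioo a b, deriv z x = deriv u₁ x - deriv u₂ x := fun x hx =>
    deriv_sub (hd₁ x hx) (hd₂ x hx)
  have hz'i : IntegrableOn (deriv z) (Ioo a b) volume := by
    have h : IntegrableOn (fun x => deriv u₁ x - deriv u₂ x) (Ioo a b) volume :=
      (H1_deriv_int hu₁).sub (H1_deriv_int hu₂)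
    exact h.congr ((ae_restrict_iff' measurableSet_Ioo).2
      (Eventually.of_forall fun x hx => (hzderiv x hx).symm))
  have hanti : ∀ t : ℝ, StrictAnti (f t) := fun t => strictAnti_of_deriv_neg (hdec t)
  have hfcont : Continuous (Function.uncurry f) := hf.continuous
  set W : ℝ := c * (b - a) ^ α with hW_def
  have hW : 0 ≤ W := mul_nonneg hc.le (Real.rpow_nonneg (by linarith) _)
  obtain ⟨C₀, hC₀⟩ := isCompact_Icc.exists_bound_of_continuousOn
    ((mlE_cont hα1 hα2).continuousOn (s := Icc (-W) W))
  obtain ⟨C₁, hC₁⟩ := isCompact_Icc.exists_bound_of_continuousOn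
    ((mlE_deriv_cont hα1 hα2).continuousOn (s := Icc (-W) W))
  have hmem : ∀ {t s : ℝ}, a ≤ s → s ≤ t → t ≤ b → (-c * (t - s) ^ α) ∈ Icc (-W) W := by
    intro t s has hst htb
    have hX0 : 0 ≤ (t - s) ^ α := Real.rpow_nonneg (by linarith) _
    have hX : (t - s) ^ α ≤ (b - a) ^ α :=
      Real.rpow_le_rpow (by linarith) (by linarith) hα1.le
    have h2 : c * (t - s) ^ α ≤ W := by
      rw [hW_def]; exact mul_le_mul_of_nonneg_left hX hc.le
    constructor
    · nlinarith
    · nlinarith [mul_nonneg hc.le hX0]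
  have hC₀0 : 0 ≤ C₀ := le_trans (norm_nonneg _) (hC₀ 0 ⟨by linarith, hW⟩)
  have hC₁0 : 0 ≤ C₁ := le_trans (norm_nonneg _) (hC₁ 0 ⟨by linarith, hW⟩)
  -- difference equation
  have habc : ∀ t ∈ Ioc a b,
      Bc * ∫ s in a..t, mlE α (-c * (t - s) ^ α) * deriv z s
        = f t (u₁ t) - f t (u₂ t) := by
    intro t ht
    have hae : ∀ᵐ (x : ℝ) ∂volume, x ≠ t :=
      ae_iff.mpr (by simpa using measure_singleton t)
    have e : abc Bα α a u₁ t - abc Bα α a u₂ t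
        = Bc * ∫ s in a..t, mlE α (-c * (t - s) ^ α) * deriv z s := by
      simp only [abc]
      rw [← hc_def, ← hBc_def, ← mul_sub]
      congr 1
      rw [← intervalIntegral.integral_sub
        (bddcont_mul_int (ker_cont hα1 hα2 c t) (H1_deriv_int hu₁) ht.1.le le_rfl ht.2)
        (bddcont_mul_int (ker_cont hα1 hα2 c t) (H1_deriv_int hu₂) ht.1.le le_rfl ht.2)]
      apply intervalIntegral.integral_congr_ae
      filter_upwards [hae] with x hx hxmem
      rw [uIoc_of_le ht.1.le] at hxmem
      have hxIoo : x ∈ Ioo a b := ⟨hxmem.1, lt_of_lt_of_le (lt_of_le_of_ne hxmem.2 hx) ht.2⟩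
      rw [hzderiv x hxIoo]
      ring
    rw [← e, heq₁ t ht, heq₂ t ht]
  -- initial value
  have habc_lim : ∀ (u : ℝ → ℝ), MemH1 a b u →
      (∀ t ∈ Ioc a b, abc Bα α a u t = f t (u t)) → f a (u a) = 0 := by
    intro u hu hequ
    have hint : IntegrableOn (fun s => |deriv u s|) (Icc a b) volume := by
      rw [integrableOn_Icc_iff_integrableOn_Ioo]
      exact (H1_deriv_int hu).abs
    set G : ℝ → ℝ := fun t => ∫ s in a..t, |deriv u s| with hG_def
    have hGc : ContinuousOn G (Icc a b) := by
      have h := intervalIntegral.continuousOn_primitive_interval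
        (a := a) (b := b) (f := fun s => |deriv u s|) (μ := volume)
        (by rwa [uIcc_of_le hab.le])
      rwa [uIcc_of_le hab.le] at h
    have hGa : G a = 0 := intervalIntegral.integral_same
    have hbound : ∀ t ∈ Ioc a b, |f t (u t)| ≤ Bc * C₀ * G t := by
      intro t ht
      rw [← hequ t ht]
      have hKint : IntervalIntegrable (fun s => mlE α (-c * (t - s) ^ α) * deriv u s)
          volume a t :=
        bddcont_mul_int (ker_cont hα1 hα2 c t) (H1_deriv_int hu) ht.1.le le_rfl ht.2
      have habs_int : IntervalIntegrable (fun s => |deriv u s|) volume a t := by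
        rw [intervalIntegrable_iff_integrableOn_Ioo_of_le ht.1.le]
        have h1 : IntegrableOn (fun s => |deriv u s|) (Ioo a b) volume := (H1_deriv_int hu).abs
        exact h1.mono_set (Ioo_subset_Ioo le_rfl ht.2)
      have habs : |∫ s in a..t, mlE α (-c * (t - s) ^ α) * deriv u s| ≤ C₀ * G t := by
        refine (intervalIntegral.abs_integral_le_integral_abs ht.1.le).trans ?_
        have hmono : (∫ s in a..t, |mlE α (-c * (t - s) ^ α) * deriv u s|)
            ≤ ∫ s in a..t, C₀ * |deriv u s| := by
          apply intervalIntegral.integral_mono_on ht.1.le hKint.abs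
            (habs_int.const_mul C₀)
          intro s hs
          rw [abs_mul]
          apply mul_le_mul_of_nonneg_right ?_ (abs_nonneg _)
          have h := hC₀ _ (hmem hs.1 hs.2 ht.2)
          rwa [Real.norm_eq_abs] at h
        refine hmono.trans (le_of_eq ?_)
        rw [intervalIntegral.integral_const_mul]
      have e2 : |abc Bα α a u t|
          = Bc * |∫ s in a..t, mlE α (-c * (t - s) ^ α) * deriv u s| := by
        simp only [abc]
        rw [← hc_def, ← hBc_def, abs_mul, abs_of_pos hBc]
      rw [e2]
      calc Bc * |∫ s in a..t, mlE α (-c * (t - s) ^ α) * deriv u s|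
          ≤ Bc * (C₀ * G t) := mul_le_mul_of_nonneg_left habs hBc.le
        _ = Bc * C₀ * G t := by ring
    have l1 : Tendsto (fun t => f t (u t)) (𝓝[Ioc a b] a) (𝓝 (f a (u a))) := by
      have hcu : ContinuousWithinAt u (Ioc a b) a :=
        (hu.1 a (left_mem_Icc.2 hab.le)).mono Ioc_subset_Icc_self
      exact hfcont.continuousAt.comp_continuousWithinAt (continuousWithinAt_id.prodMk hcu)
    have l2 : Tendsto (fun t => f t (u t)) (𝓝[Ioc a b] a) (𝓝 0) := by
      apply squeeze_zero_norm'
      · filter_upwards [self_mem_nhdsWithin] with t ht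
        simpa [Real.norm_eq_abs] using hbound t ht
      · have hG0 : Tendsto G (𝓝[Ioc a b] a) (𝓝 0) := by
          have h := hGc a (left_mem_Icc.2 hab.le)
          rw [ContinuousWithinAt, hGa] at h
          exact h.mono_left (nhdsWithin_mono a Ioc_subset_Icc_self)
        have h := hG0.const_mul (Bc * C₀)
        simpa using h
    haveI : (𝓝[Ioc a b] a).NeBot := by
      rw [nhdsWithin_Ioc_eq_nhdsGT hab]; infer_instance
    exact tendsto_nhds_unique l1 l2
  have hza : z a = 0 := by
    have e₁ := habc_lim u₁ hu₁ heq₁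
    have e₂ := habc_lim u₂ hu₂ heq₂
    have h := (hanti a).injective (e₁.trans e₂.symm)
    simp only [hz_def]
    rw [h, sub_self]
  -- choice of δ
  set D : ℝ := C₁ * c with hD_def
  have hD0 : 0 ≤ D := mul_nonneg hC₁0 hc.le
  set δ : ℝ := ((2 * D + 1)⁻¹) ^ (α⁻¹) with hδ_def
  have hδpos : 0 < δ := Real.rpow_pos_of_pos (inv_pos.2 (by linarith)) _
  have hδα : δ ^ α = (2 * D + 1)⁻¹ := by
    rw [hδ_def, ← Real.rpow_mul (le_of_lt (inv_pos.2 (by linarith))),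
      inv_mul_cancel₀ (ne_of_gt hα1), Real.rpow_one]
  have hδsmall : D * δ ^ α ≤ 1 / 2 := by
    rw [hδα, ← div_eq_mul_inv, div_le_iff₀ (by linarith : (0:ℝ) < 2 * D + 1)]
    linarith
  -- step
  have hstep : ∀ T, a ≤ T → T < b → (∀ s ∈ Icc a T, z s = 0) →
      ∀ s ∈ Icc T (min (T + δ) b), z s = 0 := by
    intro T haT hTb hz0
    have hTt' : T < min (T + δ) b := lt_min (by linarith) hTb
    have ht'b : min (T + δ) b ≤ b := min_le_right _ _
    have ht'δ : min (T + δ) b ≤ T + δ := min_le_left _ _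
    have hcont' : ContinuousOn (fun s => |z s|) (Icc T (min (T + δ) b)) :=
      (hzc.mono (Icc_subset_Icc (by linarith) ht'b)).abs
    obtain ⟨τ, hτmem, hτmax⟩ :=
      isCompact_Icc.exists_isMaxOn (nonempty_Icc.2 hTt'.le) hcont'
    by_cases hMz : z τ = 0
    · intro s hs
      have h := hτmax hs
      simp only [hMz, abs_zero] at h
      exact abs_eq_zero.1 (le_antisymm h (abs_nonneg _))
    · exfalso
      have hTτ : T < τ := by
        rcases eq_or_lt_of_le hτmem.1 with h | h
        · exact absurd (by rw [← h]; exact hz0 T ⟨haT, le_refl T⟩) hMz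
        · exact h
      have hτb : τ ≤ b := le_trans hτmem.2 ht'b
      have hτIoc : τ ∈ Ioc a b := ⟨lt_of_le_of_lt haT hTτ, hτb⟩
      have int_aT : IntervalIntegrable (fun s => mlE α (-c * (τ - s) ^ α) * deriv z s)
          volume a T :=
        bddcont_mul_int (ker_cont hα1 hα2 c τ) hz'i haT le_rfl hTb.le
      have int_Tτ : IntervalIntegrable (fun s => mlE α (-c * (τ - s) ^ α) * deriv z s)
          volume T τ :=
        bddcont_mul_int (ker_cont hα1 hα2 c τ) hz'i hTτ.le haT hτb
      have hsplit : (∫ s in a..τ, mlE α (-c * (τ - s) ^ α) * deriv z s)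
          = (∫ s in a..T, mlE α (-c * (τ - s) ^ α) * deriv z s)
            + ∫ s in T..τ, mlE α (-c * (τ - s) ^ α) * deriv z s :=
        (intervalIntegral.integral_add_adjacent_intervals int_aT int_Tτ).symm
      have hzero1 : (∫ s in a..T, mlE α (-c * (τ - s) ^ α) * deriv z s) = 0 := by
        rcases eq_or_lt_of_le haT with h | h
        · rw [← h, intervalIntegral.integral_same]
        · have hae : ∀ᵐ (x : ℝ) ∂volume, x ≠ T :=
            ae_iff.mpr (by simpa using measure_singleton T)
          have hcongr : ∀ᵐ x ∂volume, x ∈ Set.uIoc a T →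
              mlE α (-c * (τ - x) ^ α) * deriv z x = (0:ℝ) := by
            filter_upwards [hae] with x hx hxmem
            rw [uIoc_of_le h.le] at hxmem
            have hxIoo : x ∈ Ioo a T := ⟨hxmem.1, lt_of_le_of_ne hxmem.2 hx⟩
            have hdz : deriv z x = 0 := by
              have hev : z =ᶠ[𝓝 x] (fun _ => (0:ℝ)) :=
                Filter.eventuallyEq_of_mem (isOpen_Ioo.mem_nhds hxIoo)
                  (fun y hy => hz0 y ⟨hy.1.le, hy.2.le⟩)
              rw [hev.deriv_eq]
              exact deriv_const x 0
            rw [hdz, mul_zero]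
          rw [intervalIntegral.integral_congr_ae hcongr]
          simp
      have hibp := ibp hα1 hα2 c haT hTτ hτb hzc hzd hz'i (hz0 T ⟨haT, le_refl T⟩)
      have heqτ := habc τ hτIoc
      rw [hsplit, hzero1, zero_add, hibp] at heqτ
      set R := ∫ s in T..τ, deriv (mlE α) (-c * (τ - s) ^ α) * (c * α * (τ - s) ^ (α - 1)) * z s
        with hR_def
      have hsign : z τ * (f τ (u₁ τ) - f τ (u₂ τ)) ≤ 0 := by
        rcases lt_trichotomy (u₁ τ) (u₂ τ) with h | h | h
        · have hf2 := (hanti τ) h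
          have hzneg : z τ < 0 := sub_neg.2 h
          nlinarith
        · have : z τ = 0 := by simp only [hz_def]; rw [h, sub_self]
          rw [this, zero_mul]
        · have hf2 := (hanti τ) h
          have hzpos : 0 < z τ := sub_pos.2 h
          nlinarith
      have hkey : Bc * |z τ| ≤ |Bc * z τ - (f τ (u₁ τ) - f τ (u₂ τ))| :=
        sign_abs_le hBc hsign
      have hRval : Bc * z τ - (f τ (u₁ τ) - f τ (u₂ τ)) = Bc * R := by
        rw [← heqτ]; ring
      have hRbound : |R| ≤ D * (τ - T) ^ α * |z τ| := by
        have hint2 : IntervalIntegrable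
            (fun s => deriv (mlE α) (-c * (τ - s) ^ α) * (c * α * (τ - s) ^ (α - 1)) * z s)
            volume T τ :=
          kerDeriv_int hα1 hα2 c hTτ.le (hzc.mono (Icc_subset_Icc haT hτb))
        refine (intervalIntegral.abs_integral_le_integral_abs hTτ.le).trans ?_
        have hmono : (∫ s in T..τ,
              |deriv (mlE α) (-c * (τ - s) ^ α) * (c * α * (τ - s) ^ (α - 1)) * z s|)
            ≤ ∫ s in T..τ, (C₁ * (c * α) * |z τ|) * (τ - s) ^ (α - 1) := by
          apply intervalIntegral.integral_mono_on hTτ.le hint2.abs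
            ((rpow_ker_int hα1 T τ).const_mul _)
          intro s hs
          have hsτ : 0 ≤ τ - s := by linarith [hs.2]
          have h3 : (0:ℝ) ≤ (τ - s) ^ (α - 1) := Real.rpow_nonneg hsτ _
          have hzs : |z s| ≤ |z τ| := hτmax ⟨hs.1, le_trans hs.2 hτmem.2⟩
          have hds : |deriv (mlE α) (-c * (τ - s) ^ α)| ≤ C₁ := by
            have h := hC₁ _ (hmem (le_trans haT hs.1) hs.2 hτb)
            rwa [Real.norm_eq_abs] at h
          have hmidnn : (0:ℝ) ≤ c * α * (τ - s) ^ (α - 1) :=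
            mul_nonneg (mul_nonneg hc.le hα1.le) h3
          have hmid : |c * α * (τ - s) ^ (α - 1)| = c * α * (τ - s) ^ (α - 1) :=
            abs_of_nonneg hmidnn
          calc |deriv (mlE α) (-c * (τ - s) ^ α) * (c * α * (τ - s) ^ (α - 1)) * z s|
              = |deriv (mlE α) (-c * (τ - s) ^ α)| * (c * α * (τ - s) ^ (α - 1)) * |z s| := by
                rw [abs_mul, abs_mul, hmid]
            _ ≤ C₁ * (c * α * (τ - s) ^ (α - 1)) * |z τ| := by gcongr
            _ = (C₁ * (c * α) * |z τ|) * (τ - s) ^ (α - 1) := by ring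
        refine hmono.trans (le_of_eq ?_)
        rw [intervalIntegral.integral_const_mul, rpow_ker_integral hα1 hTτ.le, hD_def]
        field_simp [ne_of_gt hα1]
      have hτT : (τ - T) ^ α ≤ δ ^ α :=
        Real.rpow_le_rpow (by linarith) (by linarith [hτmem.2, ht'δ]) hα1.le
      have h5 : Bc * |z τ| ≤ Bc * |R| := by
        rw [hRval, abs_mul, abs_of_pos hBc] at hkey
        exact hkey
      have h6 : |z τ| ≤ |R| := le_of_mul_le_mul_left h5 hBc
      have h7 : D * (τ - T) ^ α ≤ 1 / 2 :=
        le_trans (mul_le_mul_of_nonneg_left hτT hD0) hδsmall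
      have hfin : |z τ| ≤ 1 / 2 * |z τ| := by
        refine h6.trans (hRbound.trans ?_)
        nlinarith [abs_nonneg (z τ)]
      have h8 : |z τ| ≤ 0 := by linarith
      exact hMz (abs_eq_zero.1 (le_antisymm h8 (abs_nonneg _)))
  -- assembly
  set S : Set ℝ := {T | T ∈ Icc a b ∧ ∀ s ∈ Icc a T, z s = 0} with hS_def
  have haS : a ∈ S := ⟨left_mem_Icc.2 hab.le, fun s hs => by
    have h : s = a := le_antisymm hs.2 hs.1
    rw [h]; exact hza⟩
  have hSbdd : BddAbove S := ⟨b, fun x hx => hx.1.2⟩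
  set T₀ := sSup S with hT₀_def
  have haT₀ : a ≤ T₀ := le_csSup hSbdd haS
  have hT₀b : T₀ ≤ b := csSup_le ⟨a, haS⟩ (fun x hx => hx.1.2)
  have hzero : ∀ s ∈ Icc a T₀, z s = 0 := by
    intro s hs
    rcases eq_or_lt_of_le hs.2 with h | h
    · rcases eq_or_lt_of_le haT₀ with h2 | h2
      · rw [h, ← h2]; exact hza
      · have hzlt : ∀ x ∈ Ico a T₀, z x = 0 := by
          intro x hx
          obtain ⟨y, hyS, hxy⟩ := exists_lt_of_lt_csSup ⟨a, haS⟩ hx.2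
          exact hyS.2 x ⟨hx.1, hxy.le⟩
        have hcw : ContinuousWithinAt z (Ico a T₀) T₀ :=
          (hzc T₀ ⟨haT₀, hT₀b⟩).mono
            (fun x hx => ⟨hx.1, le_trans hx.2.le hT₀b⟩)
        haveI hne : (𝓝[Ico a T₀] T₀).NeBot := by
          rw [nhdsWithin_Ico_eq_nhdsLT h2]; infer_instance
        have l2 : Tendsto z (𝓝[Ico a T₀] T₀) (𝓝 0) := by
          refine Tendsto.congr' ?_ tendsto_const_nhds
          filter_upwards [self_mem_nhdsWithin] with x hx
          exact (hzlt x hx).symm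
        rw [h]
        exact tendsto_nhds_unique hcw l2
    · obtain ⟨y, hyS, hsy⟩ := exists_lt_of_lt_csSup ⟨a, haS⟩ h
      exact hyS.2 s ⟨hs.1, hsy.le⟩
  have hT₀eq : T₀ = b := by
    by_contra hne
    have hT₀lt : T₀ < b := lt_of_le_of_ne hT₀b hne
    have hst := hstep T₀ haT₀ hT₀lt hzero
    have hmemS : min (T₀ + δ) b ∈ S := by
      refine ⟨⟨le_min (by linarith) hab.le, min_le_right _ _⟩, ?_⟩
      intro s hs
      rcases le_or_gt s T₀ with h | h
      · exact hzero s ⟨hs.1, h⟩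
      · exact hst s ⟨h.le, hs.2⟩
    have hle : min (T₀ + δ) b ≤ T₀ := le_csSup hSbdd hmemS
    have hlt : T₀ < min (T₀ + δ) b := lt_min (by linarith) hT₀lt
    linarith
  intro t ht
  have hz := hzero t (by rw [hT₀eq]; exact ht)
  have : u₁ t - u₂ t = 0 := hz
  linarith
end
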